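/- arXiv:1811.11433 — 6 statements merged into one kernel-verified Lean document; each statement's English description precedes it below -/
import Mathlib

section
/- For a symmetric positive definite matrix D, log det(diag(D)) - log det(D) = 0 if and only if D is diagonal. -/
/-!
Rescale `D` to its correlation matrix `C = S⁻¹ D S⁻¹`, where `S` is the diagonal matrix of the
square roots of the diagonal entries of `D`. Then `C` is positive definite with unit diagonal, so
its eigenvalues `λᵢ > 0` satisfy `∑ λᵢ = p`, and `det C = det D / ∏ Dᵢᵢ`. If `det D = ∏ Dᵢᵢ` then
`∏ λᵢ = 1` as well, and `∑ (λᵢ - 1 - log λᵢ) = 0` with every term nonnegative forces all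
`λᵢ = 1`. Hence `C = 1`, i.e. `D` is diagonal.
-/

open Finset
open scoped ComplexOrder

theorem eq_one_of_sum_eq_card_of_prod_eq_one {ι : Type*} [Fintype ι] {x : ι → ℝ}
    (hx : ∀ i, 0 < x i) (hsum : ∑ i, x i = Fintype.card ι) (hprod : ∏ i, x i = 1) (i : ι) :
    x i = 1 := by
  have hgap : ∑ i, (x i - 1 - Real.log (x i)) = 0 := by
    rw [sum_sub_distrib, sum_sub_distrib, ← Real.log_prod fun i _ => (hx i).ne', hprod, hsum]
    simp
  have hgap_i := (sum_eq_zero_iff_of_nonneg fun i _ => sub_nonneg.2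
    (Real.log_le_sub_one_of_pos (hx i))).1 hgap i (mem_univ i)
  by_contra hne
  linarith [Real.log_lt_sub_one_of_pos (hx i) hne]

namespace Matrix

variable {n : Type*} [Fintype n] [DecidableEq n]

theorem IsHermitian.eq_one_of_eigenvalues_eq_one {𝕜 : Type*} [RCLike 𝕜] {A : Matrix n n 𝕜}
    (hA : A.IsHermitian) (h : ∀ i, hA.eigenvalues i = 1) : A = 1 := by
  have hdiag : diagonal (RCLike.ofReal ∘ hA.eigenvalues : n → 𝕜) = 1 := by
    ext i j
    simp [diagonal_apply, one_apply, h]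
  rw [hA.spectral_theorem, hdiag, map_one]

theorem PosDef.eq_one_of_trace_eq_card_of_det_eq_one {𝕜 : Type*} [RCLike 𝕜]
    {A : Matrix n n 𝕜} (hA : A.PosDef) (htrace : A.trace = Fintype.card n) (hdet : A.det = 1) :
    A = 1 := by
  refine hA.isHermitian.eq_one_of_eigenvalues_eq_one <|
    eq_one_of_sum_eq_card_of_prod_eq_one hA.eigenvalues_pos ?_ ?_
  · rw [hA.isHermitian.trace_eq_sum_eigenvalues] at htrace
    exact_mod_cast htrace
  · rw [hA.isHermitian.det_eq_prod_eigenvalues] at hdet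
    exact_mod_cast hdet

noncomputable def correlation (D : Matrix n n ℝ) : Matrix n n ℝ :=
  diagonal (fun i => (√(D i i))⁻¹) * D * diagonal (fun i => (√(D i i))⁻¹)

theorem correlation_apply (D : Matrix n n ℝ) (i j : n) :
    D.correlation i j = D i j / (√(D i i) * √(D j j)) := by
  simp only [correlation, mul_diagonal, diagonal_mul]
  ring

theorem PosDef.correlation_apply_self {D : Matrix n n ℝ} (hD : D.PosDef) (i : n) :
    D.correlation i i = 1 := by
  rw [correlation_apply, Real.mul_self_sqrt hD.diag_pos.le, div_self hD.diag_pos.ne']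

theorem PosDef.trace_correlation {D : Matrix n n ℝ} (hD : D.PosDef) :
    D.correlation.trace = Fintype.card n := by
  simp [trace, hD.correlation_apply_self]

theorem PosDef.det_correlation {D : Matrix n n ℝ} (hD : D.PosDef) :
    D.correlation.det = D.det / ∏ i, D i i := by
  have hsq : (∏ i, (√(D i i))⁻¹) * ∏ i, (√(D i i))⁻¹ = (∏ i, D i i)⁻¹ := by
    rw [← prod_mul_distrib, ← prod_inv_distrib]
    refine prod_congr rfl fun i _ => ?_
    rw [← mul_inv, Real.mul_self_sqrt hD.diag_pos.le]
  rw [correlation, det_mul, det_mul, det_diagonal, mul_right_comm, hsq, div_eq_inv_mul]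

theorem PosDef.posDef_correlation {D : Matrix n n ℝ} (hD : D.PosDef) : D.correlation.PosDef := by
  have hunit : IsUnit (diagonal fun i => (√(D i i))⁻¹) := by
    rw [isUnit_diagonal, Pi.isUnit_iff]
    exact fun i => (inv_pos.2 (Real.sqrt_pos.2 hD.diag_pos)).ne'.isUnit
  simpa [correlation, diagonal_conjTranspose] using
    hD.conjTranspose_mul_mul_same (mulVec_injective_of_isUnit hunit)

theorem PosDef.det_eq_prod_diag_iff_isDiag {D : Matrix n n ℝ} (hD : D.PosDef) :
    D.det = ∏ i, D i i ↔ D.IsDiag := by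
  refine ⟨fun hdet i j hij => ?_, fun hdiag => ?_⟩
  · have hdet_corr : D.correlation.det = 1 := by
      rw [hD.det_correlation, hdet, div_self (prod_pos fun i _ => hD.diag_pos).ne']
    have hcorr : D.correlation = 1 :=
      hD.posDef_correlation.eq_one_of_trace_eq_card_of_det_eq_one hD.trace_correlation hdet_corr
    have hentry := congrFun (congrFun hcorr i) j
    rw [correlation_apply, one_apply_ne hij, div_eq_zero_iff] at hentry
    exact hentry.resolve_right (mul_pos (Real.sqrt_pos.2 hD.diag_pos)
      (Real.sqrt_pos.2 hD.diag_pos)).ne'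
  · conv_lhs => rw [← hdiag.diagonal_diag]
    exact det_diagonal

end Matrix

theorem stmt1 {p : ℕ} (D : Matrix (Fin p) (Fin p) ℝ) (hD : D.PosDef) :
    Real.log (Matrix.diagonal (fun a => D a a)).det - Real.log D.det = 0 ↔ D.IsDiag := by
  have hprod : 0 < ∏ i, D i i := prod_pos fun i _ => hD.diag_pos
  rw [sub_eq_zero, Matrix.det_diagonal, Real.log_injOn_pos.eq_iff hprod hD.det_pos, eq_comm,
    hD.det_eq_prod_diag_iff_isDiag]
end

section
/- The approximate Hessian operator H̃ defined by H̃_{abcd} = δ_{ac}δ_{bd}Γ_{ab} + δ_{ad}δ_{bc} - 2δ_{abcd}, where Γ_{ab} = (1/n)Σᵢ Dⁱ_{bb}/Dⁱ_{aa} with Dⁱ positive definite, is a positive semidefinite quadratic form on p×p matrices: ⟨M, H̃ M⟩ = Σ_{a,b,c,d} H̃_{abcd} M_{ab} M_{cd} ≥ 0 for all M. -/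
/-!
Symmetrising over the pairs `(a, b)` and `(b, a)`, the quadratic form becomes a sum of the binary
forms `Γ_ab x² + 2xy + Γ_ba y²` (`a ≠ b`) and `2 (Γ_aa - 1) x²`. These are nonnegative as soon as
`Γ ≥ 0` and `Γ_ab Γ_ba ≥ 1`, and for `Γ_ab` the mean of the ratios `r_i = Dⁱ_bb / Dⁱ_aa` the
latter is the Cauchy–Schwarz inequality `(∑ r_i) (∑ 1 / r_i) ≥ n²`.
-/

open Matrix

open Finset

section CauchySchwarz

variable {κ : Type*}

theorem card_sq_le_sum_mul_sum_inv (s : Finset κ) {r : κ → ℝ} (hr : ∀ i ∈ s, 0 < r i) :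
    (#s : ℝ) ^ 2 ≤ (∑ i ∈ s, r i) * ∑ i ∈ s, (r i)⁻¹ := by
  have h := sq_sum_div_le_sum_sq_div s (fun _ ↦ (1 : ℝ)) hr
  simp only [sum_const, nsmul_eq_mul, mul_one, one_pow, one_div] at h
  rcases s.eq_empty_or_nonempty with rfl | hs
  · simp
  · rwa [div_le_iff₀ (sum_pos hr hs), mul_comm] at h

theorem one_le_mean_div_mul_mean_div (s : Finset κ) (hs : s.Nonempty) {x y : κ → ℝ}
    (hx : ∀ i ∈ s, 0 < x i) (hy : ∀ i ∈ s, 0 < y i) :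
    1 ≤ (1 / #s * ∑ i ∈ s, y i / x i) * (1 / #s * ∑ i ∈ s, x i / y i) := by
  have hcard : (0 : ℝ) < #s := by exact_mod_cast hs.card_pos
  have h := card_sq_le_sum_mul_sum_inv s fun i hi ↦ div_pos (hy i hi) (hx i hi)
  simp only [inv_div] at h
  rw [show ∀ u v : ℝ, 1 / #s * u * (1 / #s * v) = u * v / (#s : ℝ) ^ 2 by intros; ring,
    one_le_div₀ (by positivity)]
  exact h

end CauchySchwarz

theorem quadratic_nonneg_of_one_le_mul {s t : ℝ} (hs : 0 ≤ s) (hst : 1 ≤ s * t) (x y : ℝ) :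
    0 ≤ s * x ^ 2 + 2 * x * y + t * y ^ 2 := by
  have hs : 0 < s := lt_of_le_of_ne hs (by rintro rfl; linarith)
  -- `s` times the form is `(s x + y)² + (s t - 1) y²`.
  nlinarith [sq_nonneg (s * x + y), mul_nonneg (sq_nonneg y) (sub_nonneg.2 hst)]

theorem sum_sum_nonneg_of_add_swap_nonneg {ι : Type*} [Fintype ι] {f : ι → ι → ℝ}
    (h : ∀ a b, 0 ≤ f a b + f b a) : 0 ≤ ∑ a, ∑ b, f a b := by
  have htwo : ∑ a, ∑ b, f a b + ∑ a, ∑ b, f a b = ∑ a, ∑ b, (f a b + f b a) := by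
    nth_rw 2 [sum_comm]
    simp only [← sum_add_distrib]
  have := sum_nonneg fun a (_ : a ∈ univ) ↦ sum_nonneg fun b (_ : b ∈ univ) ↦ h a b
  linarith

section ApproxHessian

variable {ι : Type*} [Fintype ι] [DecidableEq ι]

def approxHessian (Γ : ι → ι → ℝ) (a b c d : ι) : ℝ :=
  (if a = c ∧ b = d then Γ a b else 0) + (if a = d ∧ b = c then 1 else 0)
    - (if a = b ∧ b = c ∧ c = d then 2 else 0)

theorem sum_sum_approxHessian_mul (Γ : ι → ι → ℝ) (M : Matrix ι ι ℝ) (a b : ι) :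
    ∑ c, ∑ d, approxHessian Γ a b c d * M a b * M c d
      = Γ a b * M a b ^ 2 + M a b * M b a - if a = b then 2 * M a b ^ 2 else 0 := by
  simp only [approxHessian, sub_mul, add_mul, ite_mul, zero_mul, sum_sub_distrib,
    sum_add_distrib, ite_and, sum_ite_irrel, sum_const_zero, sum_ite_eq, mem_univ, if_true]
  split_ifs with hab
  · subst hab; ring
  · ring

theorem approxHessian_quadForm_nonneg {Γ : ι → ι → ℝ} (hΓ : ∀ a b, 0 ≤ Γ a b)
    (hΓΓ : ∀ a b, 1 ≤ Γ a b * Γ b a) (M : Matrix ι ι ℝ) :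
    0 ≤ ∑ a, ∑ b, ∑ c, ∑ d, approxHessian Γ a b c d * M a b * M c d := by
  simp only [sum_sum_approxHessian_mul]
  refine sum_sum_nonneg_of_add_swap_nonneg fun a b ↦ ?_
  by_cases hab : a = b
  · subst hab
    -- `Γ a a ≥ 1` because `Γ a a ^ 2 ≥ 1` and `Γ a a ≥ 0`.
    have : 1 ≤ Γ a a := by nlinarith [hΓ a a, hΓΓ a a]
    simp only [if_true]
    nlinarith [sq_nonneg (M a a)]
  · rw [if_neg hab, if_neg (Ne.symm hab)]
    linarith [quadratic_nonneg_of_one_le_mul (hΓ a b) (hΓΓ a b) (M a b) (M b a)]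

end ApproxHessian

theorem stmt7 {p n : ℕ} (hn : 0 < n) (D : Fin n → Matrix (Fin p) (Fin p) ℝ)
    (hD : ∀ i, (D i).PosDef)
    (Γ : Fin p → Fin p → ℝ)
    (hΓ : ∀ a b, Γ a b = (1 / n : ℝ) * ∑ i, D i b b / D i a a)
    (Ht : Fin p → Fin p → Fin p → Fin p → ℝ)
    (hHt : ∀ a b c d, Ht a b c d =
      (if a = c ∧ b = d then Γ a b else 0) + (if a = d ∧ b = c then 1 else 0)
        - (if a = b ∧ b = c ∧ c = d then 2 else 0))
    (M : Matrix (Fin p) (Fin p) ℝ) :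
    0 ≤ ∑ a, ∑ b, ∑ c, ∑ d, Ht a b c d * M a b * M c d := by
  have hdiag : ∀ a, ∀ i ∈ univ, 0 < D i a a := fun _ i _ ↦ (hD i).diag_pos
  have hΓ_nonneg : ∀ a b, 0 ≤ Γ a b := fun a b ↦ by
    rw [hΓ]
    exact mul_nonneg (by positivity)
      (sum_nonneg fun i hi ↦ (div_pos (hdiag b i hi) (hdiag a i hi)).le)
  have hΓΓ : ∀ a b, 1 ≤ Γ a b * Γ b a := fun a b ↦ by
    have h := one_le_mean_div_mul_mean_div univ (univ_nonempty_iff.2 ⟨⟨0, hn⟩⟩)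
      (hdiag a) (hdiag b)
    rwa [card_univ, Fintype.card_fin, ← hΓ, ← hΓ] at h
  obtain rfl : Ht = approxHessian Γ := by funext a b c d; exact hHt a b c d
  exact approxHessian_quadForm_nonneg hΓ_nonneg hΓΓ M
end

section
/- If Γ_{ab}Γ_{ba} > 1 for all a ≠ b, then the kernel of H̃ is exactly the space of diagonal matrices, i.e., H̃ restricted to the (p²−p)-dimensional space of matrices with zero diagonal is positive definite. -/
open Matrix

theorem stmt9 {p : ℕ} (Γ : Fin p → Fin p → ℝ)
    (hΓpos : ∀ a b, 0 < Γ a b) (hΓdiag : ∀ a, Γ a a = 1)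
    (hΓ : ∀ a b, a ≠ b → 1 < Γ a b * Γ b a)
    (Ht : Matrix (Fin p) (Fin p) ℝ → Matrix (Fin p) (Fin p) ℝ)
    (hHt : ∀ M a b, Ht M a b = if a = b then 0 else Γ a b * M a b + M b a) :
    (∀ M : Matrix (Fin p) (Fin p) ℝ, Ht M = 0 ↔ M.IsDiag) ∧
    (∀ M : Matrix (Fin p) (Fin p) ℝ, (∀ a, M a a = 0) → M ≠ 0 →
      0 < ∑ a, ∑ b, Ht M a b * M a b) := by
  constructor
  · intro M
    constructor
    · intro h a b hab
      have h1 : Γ a b * M a b + M b a = 0 := by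
        have := congrFun (congrFun h a) b
        rw [hHt] at this
        simpa [hab] using this
      have h2 : Γ b a * M b a + M a b = 0 := by
        have := congrFun (congrFun h b) a
        rw [hHt] at this
        simpa [hab.symm] using this
      have key : (1 - Γ b a * Γ a b) * M a b = 0 := by
        linear_combination h2 - Γ b a * h1
      have hg := hΓ a b hab
      have hne : (1 - Γ b a * Γ a b) ≠ 0 := by nlinarith
      exact (mul_eq_zero.mp key).resolve_left hne
    · intro hd
      ext a b
      rw [hHt]
      by_cases hab : a = b
      · simp [hab]
      · simp [hab, hd hab, hd (Ne.symm hab)]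
  · intro M hdiag hne
    set F : Fin p → Fin p → ℝ := fun a b =>
      if a = b then 0 else Γ a b * (M a b)^2 + Γ b a * (M b a)^2 + 2 * M a b * M b a
      with hF
    have hFnonneg : ∀ a b, 0 ≤ F a b := by
      intro a b
      rw [hF]
      by_cases hab : a = b
      · simp [hab]
      · simp only [hab, if_false]
        have h1 := hΓpos a b
        have h2 := hΓpos b a
        have h3 := hΓ a b hab
        nlinarith [sq_nonneg (Γ a b * M a b + M b a), sq_nonneg (M b a)]
    have hFpos : ∀ a b, a ≠ b → M a b ≠ 0 → 0 < F a b := by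
      intro a b hab hM
      rw [hF]
      simp only [hab, if_false]
      have h1 := hΓpos a b
      have h2 := hΓpos b a
      have h3 := hΓ a b hab
      have h4 : 0 < (M a b)^2 := by positivity
      by_cases hba : M b a = 0
      · rw [hba]
        nlinarith [mul_pos h1 h4]
      · have h5 : 0 < (M b a)^2 := by positivity
        nlinarith [sq_nonneg (Γ a b * M a b + M b a), mul_pos (sub_pos.mpr h3) h5]
    have h2S : 2 * (∑ a, ∑ b, Ht M a b * M a b) = ∑ a, ∑ b, F a b := by
      have hswap : (∑ a, ∑ b, Ht M a b * M a b) = ∑ a, ∑ b, Ht M b a * M b a :=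
        Finset.sum_comm
      calc 2 * (∑ a, ∑ b, Ht M a b * M a b)
          = (∑ a, ∑ b, Ht M a b * M a b) + ∑ a, ∑ b, Ht M b a * M b a := by
            rw [← hswap]; ring
        _ = ∑ a, ∑ b, (Ht M a b * M a b + Ht M b a * M b a) := by
            rw [← Finset.sum_add_distrib]
            congr 1; ext a
            rw [← Finset.sum_add_distrib]
        _ = ∑ a, ∑ b, F a b := by
            congr 1; ext a; congr 1; ext b
            rw [hHt, hHt, hF]
            by_cases hab : a = b
            · simp [hab]
            · simp only [hab, Ne.symm hab, if_false]
              ring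
    -- find witness
    obtain ⟨a0, b0, hM0⟩ : ∃ a b, M a b ≠ 0 := by
      by_contra hc
      push_neg at hc
      exact hne (by ext a b; simp [hc])
    have hab0 : a0 ≠ b0 := by
      intro h; apply hM0; rw [h]; exact hdiag b0
    have hpos : 0 < ∑ a, ∑ b, F a b := by
      have : 0 < ∑ b, F a0 b := by
        apply Finset.sum_pos' (fun b _ => hFnonneg a0 b)
        exact ⟨b0, Finset.mem_univ b0, hFpos a0 b0 hab0 hM0⟩
      apply Finset.sum_pos' (fun a _ => Finset.sum_nonneg (fun b _ => hFnonneg a b))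
      exact ⟨a0, Finset.mem_univ a0, this⟩
    rw [← h2S] at hpos
    linarith
end

section
/- Suppose Γ_{ab}Γ_{ba} > 1 for all a ≠ b. Define P by (PG)_{ab} = (Γ_{ba} G_{ab} − G_{ba})/(Γ_{ab}Γ_{ba} − 1) for a ≠ b and (PG)_{aa} = 0. Then P is the Moore–Penrose pseudoinverse of H̃: H̃ P H̃ = H̃, P H̃ P = P, and both H̃P and PH̃ are self-adjoint with respect to the Frobenius inner product. -/
/-! On every off-diagonal pair of entries `(a, b), (b, a)`, `H̃` acts as the invertible
`2 × 2` matrix `[[Γ a b, 1], [1, Γ b a]]` and `P` as its inverse, while both kill the diagonal.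
Hence `H̃ ∘ P` and `P ∘ H̃` are the projection onto off-diagonal matrices, which is idempotent,
fixes the ranges of `H̃` and `P`, and is self-adjoint for the Frobenius pairing. -/

open Matrix

namespace Matrix

variable {n R : Type*} [DecidableEq n]

def offDiag [Zero R] (M : Matrix n n R) : Matrix n n R :=
  of fun a b => if a = b then 0 else M a b

@[simp]
theorem offDiag_apply [Zero R] (M : Matrix n n R) (a b : n) :
    offDiag M a b = if a = b then 0 else M a b :=
  rfl

theorem sum_offDiag_mul_comm [Fintype n] [CommSemiring R] (M N : Matrix n n R) :
    ∑ a, ∑ b, offDiag M a b * N a b = ∑ a, ∑ b, M a b * offDiag N a b := by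
  refine Finset.sum_congr rfl fun a _ => Finset.sum_congr rfl fun b _ => ?_
  by_cases h : a = b <;> simp [h, mul_comm]

section hTilde

variable [Field R] (Γ : n → n → R)

/-- The operator `H̃` of the paper. -/
def hTilde (M : Matrix n n R) : Matrix n n R :=
  of fun a b => if a = b then 0 else Γ a b * M a b + M b a

/-- The operator `P` of the paper. -/
def hTildePinv (G : Matrix n n R) : Matrix n n R :=
  of fun a b => if a = b then 0 else (Γ b a * G a b - G b a) / (Γ a b * Γ b a - 1)

@[simp]
theorem hTilde_apply (M : Matrix n n R) (a b : n) :
    hTilde Γ M a b = if a = b then 0 else Γ a b * M a b + M b a :=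
  rfl

@[simp]
theorem hTildePinv_apply (G : Matrix n n R) (a b : n) :
    hTildePinv Γ G a b =
      if a = b then 0 else (Γ b a * G a b - G b a) / (Γ a b * Γ b a - 1) :=
  rfl

theorem offDiag_hTilde (M : Matrix n n R) : offDiag (hTilde Γ M) = hTilde Γ M := by
  ext a b
  by_cases h : a = b <;> simp [h]

theorem offDiag_hTildePinv (G : Matrix n n R) : offDiag (hTildePinv Γ G) = hTildePinv Γ G := by
  ext a b
  by_cases h : a = b <;> simp [h]

variable {Γ} (hΓ : ∀ a b, a ≠ b → Γ a b * Γ b a ≠ 1)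
include hΓ

theorem hTilde_hTildePinv (G : Matrix n n R) : hTilde Γ (hTildePinv Γ G) = offDiag G := by
  ext a b
  by_cases h : a = b
  · simp [h]
  · have hΔ : Γ a b * Γ b a - 1 ≠ 0 := sub_ne_zero.mpr (hΓ a b h)
    simp only [hTilde_apply, hTildePinv_apply, offDiag_apply, h, Ne.symm h, if_false,
      mul_comm (Γ b a) (Γ a b)]
    field_simp
    ring

theorem hTildePinv_hTilde (M : Matrix n n R) : hTildePinv Γ (hTilde Γ M) = offDiag M := by
  ext a b
  by_cases h : a = b
  · simp [h]
  · have hΔ : Γ a b * Γ b a - 1 ≠ 0 := sub_ne_zero.mpr (hΓ a b h)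
    simp only [hTilde_apply, hTildePinv_apply, offDiag_apply, h, Ne.symm h, if_false]
    rw [div_eq_iff hΔ]
    ring

end hTilde

end Matrix

theorem stmt10_general {p : ℕ} (Γ : Fin p → Fin p → ℝ)
    (hΓ : ∀ a b, a ≠ b → 1 < Γ a b * Γ b a)
    (Ht P : Matrix (Fin p) (Fin p) ℝ → Matrix (Fin p) (Fin p) ℝ)
    (hHt : ∀ M a b, Ht M a b = if a = b then 0 else Γ a b * M a b + M b a)
    (hP : ∀ G a b, P G a b =
      if a = b then 0 else (Γ b a * G a b - G b a) / (Γ a b * Γ b a - 1)) :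
    (∀ M, Ht (P (Ht M)) = Ht M) ∧ (∀ M, P (Ht (P M)) = P M) ∧
    (∀ M N : Matrix (Fin p) (Fin p) ℝ,
      ∑ a, ∑ b, Ht (P M) a b * N a b = ∑ a, ∑ b, M a b * Ht (P N) a b) ∧
    (∀ M N : Matrix (Fin p) (Fin p) ℝ,
      ∑ a, ∑ b, P (Ht M) a b * N a b = ∑ a, ∑ b, M a b * P (Ht N) a b) := by
  obtain rfl : Ht = hTilde Γ := funext fun M => ext (hHt M)
  obtain rfl : P = hTildePinv Γ := funext fun G => ext (hP G)
  have hΓ' : ∀ a b, a ≠ b → Γ a b * Γ b a ≠ 1 := fun a b h => (hΓ a b h).ne'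
  refine ⟨fun M => ?_, fun G => ?_, fun M N => ?_, fun M N => ?_⟩
  · rw [hTilde_hTildePinv hΓ', offDiag_hTilde]
  · rw [hTildePinv_hTilde hΓ', offDiag_hTildePinv]
  · simp only [hTilde_hTildePinv hΓ', sum_offDiag_mul_comm]
  · simp only [hTildePinv_hTilde hΓ', sum_offDiag_mul_comm]

theorem stmt10 {p : ℕ} (Γ : Fin p → Fin p → ℝ)
    (hΓpos : ∀ a b, 0 < Γ a b) (hΓdiag : ∀ a, Γ a a = 1)
    (hΓ : ∀ a b, a ≠ b → 1 < Γ a b * Γ b a)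
    (Ht P : Matrix (Fin p) (Fin p) ℝ → Matrix (Fin p) (Fin p) ℝ)
    (hHt : ∀ M a b, Ht M a b = if a = b then 0 else Γ a b * M a b + M b a)
    (hP : ∀ G a b, P G a b =
      if a = b then 0 else (Γ b a * G a b - G b a) / (Γ a b * Γ b a - 1)) :
    (∀ M, Ht (P (Ht M)) = Ht M) ∧ (∀ M, P (Ht (P M)) = P M) ∧
    (∀ M N : Matrix (Fin p) (Fin p) ℝ,
      ∑ a, ∑ b, Ht (P M) a b * N a b = ∑ a, ∑ b, M a b * Ht (P N) a b) ∧
    (∀ M N : Matrix (Fin p) (Fin p) ℝ,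
      ∑ a, ∑ b, P (Ht M) a b * N a b = ∑ a, ∑ b, M a b * P (Ht N) a b) :=
  stmt10_general Γ hΓ Ht P hHt hP
end

section
/- If G is a p×p matrix with G ≠ 0 and G has zero diagonal, and H̃ is positive definite on off-diagonal matrices (Γ_{ab}Γ_{ba} > 1 for a ≠ b), then −H̃⁺G is a descent direction: ⟨G, −H̃⁺G⟩ < 0. -/
open Matrix

theorem stmt11 {p : ℕ} (Γ : Fin p → Fin p → ℝ)
    (hΓpos : ∀ a b, 0 < Γ a b)
    (hΓ : ∀ a b, a ≠ b → 1 < Γ a b * Γ b a)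
    (G : Matrix (Fin p) (Fin p) ℝ) (hG : G ≠ 0) (hGdiag : ∀ a, G a a = 0)
    (PG : Matrix (Fin p) (Fin p) ℝ)
    (hPG : ∀ a b, PG a b =
      if a = b then 0 else (Γ b a * G a b - G b a) / (Γ a b * Γ b a - 1)) :
    ∑ a, ∑ b, G a b * (-PG a b) < 0 := by
  -- pointwise pair lemma
  have hq : ∀ a b : Fin p, a ≠ b →
      G a b * PG a b + G b a * PG b a =
      (Γ b a * G a b ^ 2 - 2 * G a b * G b a + Γ a b * G b a ^ 2) /
        (Γ a b * Γ b a - 1) := by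
    intro a b hab
    have hd : Γ a b * Γ b a - 1 > 0 := by have := hΓ a b hab; linarith
    rw [hPG a b, hPG b a, if_neg hab, if_neg hab.symm, mul_comm (Γ b a) (Γ a b)]
    field_simp
    ring
  have hnn : ∀ a b : Fin p,
      0 ≤ G a b * PG a b + G b a * PG b a := by
    intro a b
    rcases eq_or_ne a b with rfl | hab
    · simp [hPG a a]
    · rw [hq a b hab]
      have hd : 0 < Γ a b * Γ b a - 1 := by have := hΓ a b hab; linarith
      apply div_nonneg _ hd.le
      nlinarith [sq_nonneg (Γ b a * G a b - G b a), hΓpos b a, hΓ a b hab,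
        sq_nonneg (G b a), (hΓpos b a).le]
  have hpos : ∀ a b : Fin p, G a b ≠ 0 →
      0 < G a b * PG a b + G b a * PG b a := by
    intro a b hGab
    have hab : a ≠ b := by
      intro h; subst h; exact hGab (hGdiag a)
    rw [hq a b hab]
    have hd : 0 < Γ a b * Γ b a - 1 := by have := hΓ a b hab; linarith
    apply div_pos _ hd
    rcases eq_or_ne (G b a) 0 with hba | hba
    · rw [hba]
      have := pow_two_pos_of_ne_zero hGab
      nlinarith [hΓpos b a]
    · nlinarith [sq_nonneg (Γ b a * G a b - G b a), hΓpos b a,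
        mul_pos (by linarith : (0:ℝ) < Γ a b * Γ b a - 1)
          (pow_two_pos_of_ne_zero hba)]
  obtain ⟨a₀, b₀, hG0⟩ : ∃ a b, G a b ≠ 0 := by
    by_contra h
    push_neg at h
    exact hG (by ext a b; simp [h])
  set S := ∑ a, ∑ b, G a b * PG a b with hS
  have hgoal : ∑ a, ∑ b, G a b * (-PG a b) = -S := by
    simp [hS, mul_neg, Finset.sum_neg_distrib]
  have h2 : ∑ a, ∑ b, (G a b * PG a b + G b a * PG b a) = 2 * S := by
    rw [Finset.sum_congr rfl (fun a _ => Finset.sum_add_distrib),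
      Finset.sum_add_distrib]
    rw [Finset.sum_comm (f := fun a b => G b a * PG b a)]
    ring
  have hposum : 0 < ∑ a, ∑ b, (G a b * PG a b + G b a * PG b a) := by
    apply Finset.sum_pos'
    · intro a _
      exact Finset.sum_nonneg fun b _ => hnn a b
    · refine ⟨a₀, Finset.mem_univ _, ?_⟩
      apply Finset.sum_pos'
      · intro b _; exact hnn a₀ b
      · exact ⟨b₀, Finset.mem_univ _, hpos a₀ b₀ hG0⟩
  rw [hgoal]
  have h3 : 0 < 2 * S := h2 ▸ hposum
  linarith
end

section
/- If B₀ is a matrix such that every Dⁱ = B₀ Cⁱ B₀ᵀ is diagonal with positive diagonal entries, then the true relative Hessian H(B₀) given by H_{abcd} = δ_{ac}(1/n)Σᵢ[Dⁱ_{bd}/Dⁱ_{aa} − 2Dⁱ_{ab}Dⁱ_{ad}/(Dⁱ_{aa})²] + δ_{ad}δ_{bc} coincides with the approximation H̃_{abcd} = δ_{ac}δ_{bd}Γ_{ab} + δ_{ad}δ_{bc} − 2δ_{abcd}, where Γ_{ab} = (1/n)Σᵢ Dⁱ_{bb}/Dⁱ_{aa}. -/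
open Matrix

/-!
Congruence by the invertible `B₀` keeps each `Cⁱ` positive definite, so the diagonal entries
`Dⁱ_aa` are positive. Since every `Dⁱ` is diagonal, the summand
`Dⁱ_bd / Dⁱ_aa - 2 Dⁱ_ab Dⁱ_ad / (Dⁱ_aa)²` vanishes unless `b = d`, equals `Dⁱ_bb / Dⁱ_aa` when
`b = d ≠ a`, and equals `1 - 2` when `a = b = d`. Averaging over `i` gives `δ_bd (Γ_ab - 2 δ_ab)`,
and the `-2` is exactly the correction `-2 δ_abcd`.
-/

lemma Matrix.PosDef.mul_mul_transpose_of_isUnit_det {m : Type*} [Fintype m] [DecidableEq m]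
    {A B : Matrix m m ℝ} (hA : A.PosDef) (hB : IsUnit B.det) : (B * A * Bᵀ).PosDef := by
  simpa [conjTranspose_eq_transpose_of_trivial] using
    hA.mul_mul_conjTranspose_same (vecMul_injective_iff_isUnit.2 ((isUnit_iff_isUnit_det B).2 hB))

lemma Matrix.IsDiag.hessian_term_eq {m K : Type*} [Field K] [DecidableEq m]
    {M : Matrix m m K} (hM : M.IsDiag) {a : m} (ha : M a a ≠ 0) (b d : m) :
    M b d / M a a - 2 * (M a b * M a d) / M a a ^ 2
      = if b = d then M b b / M a a - (if a = b then 2 else 0) else 0 := by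
  split_ifs with hbd hab
  · subst hbd hab
    field_simp
  · subst hbd
    simp [hM hab]
  · rcases eq_or_ne a b with rfl | hab
    · simp [hM hbd]
    · simp [hM hab, hM hbd]

lemma Fin.mean_sub_const {n : ℕ} (hn : n ≠ 0) (f : Fin n → ℝ) (c : ℝ) :
    (1 / n : ℝ) * ∑ i, (f i - c) = (1 / n : ℝ) * ∑ i, f i - c := by
  have : (n : ℝ) ≠ 0 := Nat.cast_ne_zero.2 hn
  rw [Finset.sum_sub_distrib, Finset.sum_const, Finset.card_univ, Fintype.card_fin, nsmul_eq_mul]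
  field_simp

theorem stmt15 {p n : ℕ} (hn : 0 < n) (C : Fin n → Matrix (Fin p) (Fin p) ℝ)
    (hC : ∀ i, (C i).PosDef)
    (B₀ : Matrix (Fin p) (Fin p) ℝ) (hB₀ : IsUnit B₀.det)
    (D : Fin n → Matrix (Fin p) (Fin p) ℝ) (hD : ∀ i, D i = B₀ * C i * B₀ᵀ)
    (hdiag : ∀ i, (D i).IsDiag)
    (Γ : Fin p → Fin p → ℝ)
    (hΓ : ∀ a b, Γ a b = (1 / n : ℝ) * ∑ i, D i b b / D i a a) :
    ∀ a b c d : Fin p,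
      (if a = c then (1 / n : ℝ) *
          ∑ i, (D i b d / D i a a - 2 * (D i a b * D i a d) / (D i a a) ^ 2)
        else 0) + (if a = d ∧ b = c then 1 else 0)
      = (if a = c ∧ b = d then Γ a b else 0) + (if a = d ∧ b = c then 1 else 0)
          - (if a = b ∧ b = c ∧ c = d then 2 else 0) := by
  have hpos : ∀ i a, 0 < D i a a := fun i a => by
    rw [hD]; exact ((hC i).mul_mul_transpose_of_isUnit_det hB₀).diag_pos
  have hmean : ∀ a b d, (1 / n : ℝ) *
      ∑ i, (D i b d / D i a a - 2 * (D i a b * D i a d) / (D i a a) ^ 2)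
        = if b = d then Γ a b - (if a = b then 2 else 0) else 0 := fun a b d => by
    simp only [fun i => (hdiag i).hessian_term_eq (hpos i a).ne' b d]
    split_ifs
    · rw [Fin.mean_sub_const hn.ne', hΓ]
    · simp [hΓ]
    · simp
  intro a b c d
  rw [hmean]
  split_ifs <;> grind
end
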